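/- Let (θ_k, r_k) be the global AEGD iterates with effective step sizes η_k := η r_{k+1}/g(θ_k). Suppose f is L-smooth, has a minimizer θ* with minimum value f(θ*), and satisfies the Polyak–Łojasiewicz inequality with constant μ > 0. If η_j ≤ 1/L for all j with k₀ ≤ j < k (for some k₀ ≥ 0), then f(θ_k) − f(θ*) ≤ exp(−c₀ (k − k₀) r_k) · (f(θ_{k₀}) − f(θ*)), where c₀ := μη/√(f(θ_{k₀})+c). -/

import Mathlib

/-!
The AEGD step is a plain gradient step `θ_{k+1} = θ_k - η_k ∇f(θ_k)`. While `η_k ≤ 1/L`, the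
descent lemma gives `f(θ_{k+1}) ≤ f(θ_k) - (η_k/2) ‖∇f(θ_k)‖²`, so `f(θ_j)` decreases for
`k₀ ≤ j ≤ k`, and with the PL inequality each step contracts the gap `f - f(θ*)` by
`1 - μ η_k ≤ exp(-μ η_k)`. Since the energy `r` is nonincreasing and `f(θ_j) ≤ f(θ_{k₀})` there,
every step size `η_j` with `k₀ ≤ j < k` is at least `η r_k / √(f(θ_{k₀}) + c)`, which yields the
uniform rate.
-/

open scoped RealInnerProductSpace

section GradientDescent

variable {E : Type*} [NormedAddCommGroup E] [InnerProductSpace ℝ E] [CompleteSpace E]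
  {f : E → ℝ} {L : ℝ}

theorem image_add_le_of_lipschitz_gradient (hf : Differentiable ℝ f)
    (hLip : ∀ u v, ‖gradient f u - gradient f v‖ ≤ L * ‖u - v‖) (x v : E) :
    f (x + v) ≤ f x + ⟪gradient f x, v⟫ + L / 2 * ‖v‖ ^ 2 := by
  set ψ : ℝ → ℝ := fun t => f (x + t • v) - t * ⟪gradient f x, v⟫ - L / 2 * t ^ 2 * ‖v‖ ^ 2
  have hψ : ∀ t, HasDerivAt ψ (⟪gradient f (x + t • v) - gradient f x, v⟫ - L * t * ‖v‖ ^ 2) t := by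
    intro t
    have hline : HasDerivAt (fun s : ℝ => x + s • v) v t := by
      simpa using ((hasDerivAt_id t).smul_const v).const_add x
    have hcomp := (hf (x + t • v)).hasGradientAt.hasFDerivAt.comp_hasDerivAt t hline
    refine ((hcomp.sub ((hasDerivAt_id t).mul_const ⟪gradient f x, v⟫)).sub
      ((((hasDerivAt_id t).pow 2).const_mul (L / 2)).mul_const (‖v‖ ^ 2))).congr_deriv ?_
    simp only [InnerProductSpace.toDual_apply_apply, inner_sub_left, id]
    ring
  have hψ'_nonpos :
      ∀ t, 0 ≤ t → ⟪gradient f (x + t • v) - gradient f x, v⟫ - L * t * ‖v‖ ^ 2 ≤ 0 := by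
    intro t ht
    rw [sub_nonpos]
    calc ⟪gradient f (x + t • v) - gradient f x, v⟫
        ≤ ‖gradient f (x + t • v) - gradient f x‖ * ‖v‖ := real_inner_le_norm _ _
      _ ≤ L * ‖t • v‖ * ‖v‖ := by gcongr; simpa using hLip (x + t • v) x
      _ = L * t * ‖v‖ ^ 2 := by rw [norm_smul, Real.norm_of_nonneg ht]; ring
  have hanti : AntitoneOn ψ (Set.Ici 0) :=
    antitoneOn_of_hasDerivWithinAt_nonpos (convex_Ici 0)
      (fun t _ => (hψ t).continuousAt.continuousWithinAt) (fun t _ => (hψ t).hasDerivWithinAt)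
      (fun t ht => hψ'_nonpos t (by simpa using (interior_subset ht : t ∈ Set.Ici (0:ℝ))))
  have h10 : ψ 1 ≤ ψ 0 := hanti Set.self_mem_Ici (Set.mem_Ici.2 zero_le_one) zero_le_one
  simp only [ψ, one_smul, zero_smul, add_zero, one_mul, zero_mul, one_pow, sub_zero] at h10
  linarith

theorem image_sub_smul_gradient_le (hf : Differentiable ℝ f)
    (hLip : ∀ u v, ‖gradient f u - gradient f v‖ ≤ L * ‖u - v‖) (hL : 0 < L) (x : E) {s : ℝ}
    (hs : s ∈ Set.Icc 0 (1 / L)) :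
    f (x - s • gradient f x) ≤ f x - s / 2 * ‖gradient f x‖ ^ 2 := by
  have hLs : L * s ≤ 1 := (le_div_iff₀' hL).1 hs.2
  have h := image_add_le_of_lipschitz_gradient hf hLip x (-(s • gradient f x))
  rw [← sub_eq_add_neg, inner_neg_right, real_inner_smul_right, real_inner_self_eq_norm_sq,
    norm_neg, norm_smul, Real.norm_of_nonneg hs.1] at h
  nlinarith [mul_nonneg (mul_nonneg hs.1 (sq_nonneg ‖gradient f x‖)) (sub_nonneg.2 hLs)]

theorem sub_le_exp_mul_of_pl (hf : Differentiable ℝ f)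
    (hLip : ∀ u v, ‖gradient f u - gradient f v‖ ≤ L * ‖u - v‖) (hL : 0 < L) {xstar : E}
    (hmin : ∀ y, f xstar ≤ f y) {μ : ℝ}
    (hPL : ∀ y, μ * (f y - f xstar) ≤ 1 / 2 * ‖gradient f y‖ ^ 2) (x : E) {s : ℝ}
    (hs : s ∈ Set.Icc 0 (1 / L)) :
    f (x - s • gradient f x) - f xstar ≤ Real.exp (-(μ * s)) * (f x - f xstar) := by
  have hdesc := image_sub_smul_gradient_le hf hLip hL x hs
  have hgap : 0 ≤ f x - f xstar := sub_nonneg.2 (hmin x)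
  calc f (x - s • gradient f x) - f xstar ≤ (1 - μ * s) * (f x - f xstar) := by
        nlinarith [mul_le_mul_of_nonneg_left (hPL x) hs.1]
    _ ≤ Real.exp (-(μ * s)) * (f x - f xstar) := by
        gcongr
        linarith [Real.add_one_le_exp (-(μ * s))]

variable {x : ℕ → E} {s : ℕ → ℝ} {k₀ k : ℕ}

theorem image_le_of_gradient_descent (hf : Differentiable ℝ f)
    (hLip : ∀ u v, ‖gradient f u - gradient f v‖ ≤ L * ‖u - v‖) (hL : 0 < L)
    (hx : ∀ j, x (j + 1) = x j - s j • gradient f (x j))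
    (hs : ∀ j, k₀ ≤ j → j < k → s j ∈ Set.Icc 0 (1 / L)) {j : ℕ} (hj : k₀ ≤ j) (hjk : j ≤ k) :
    f (x j) ≤ f (x k₀) := by
  induction j, hj using Nat.le_induction with
  | base => exact le_rfl
  | succ j hj ih =>
    have hsj := hs j hj hjk
    calc f (x (j + 1)) ≤ f (x j) - s j / 2 * ‖gradient f (x j)‖ ^ 2 :=
          hx j ▸ image_sub_smul_gradient_le hf hLip hL (x j) hsj
      _ ≤ f (x j) := sub_le_self _ (by have := hsj.1; positivity)
      _ ≤ f (x k₀) := ih (by omega)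

theorem gradient_descent_pl_linear_rate (hf : Differentiable ℝ f)
    (hLip : ∀ u v, ‖gradient f u - gradient f v‖ ≤ L * ‖u - v‖) (hL : 0 < L) {xstar : E}
    (hmin : ∀ y, f xstar ≤ f y) {μ : ℝ}
    (hPL : ∀ y, μ * (f y - f xstar) ≤ 1 / 2 * ‖gradient f y‖ ^ 2) (hμ : 0 ≤ μ)
    (hx : ∀ j, x (j + 1) = x j - s j • gradient f (x j))
    (hs : ∀ j, k₀ ≤ j → j < k → s j ∈ Set.Icc 0 (1 / L)) {s₀ : ℝ}
    (hs₀ : ∀ j, k₀ ≤ j → j < k → s₀ ≤ s j) (hk : k₀ ≤ k) :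
    f (x k) - f xstar ≤ Real.exp (-(μ * s₀) * ((k : ℝ) - k₀)) * (f (x k₀) - f xstar) := by
  have hstep : ∀ i < k - k₀, f (x (k₀ + i + 1)) - f xstar
      ≤ Real.exp (-(μ * s₀)) * (f (x (k₀ + i)) - f xstar) := by
    intro i hi
    calc f (x (k₀ + i + 1)) - f xstar
        ≤ Real.exp (-(μ * s (k₀ + i))) * (f (x (k₀ + i)) - f xstar) :=
          hx _ ▸ sub_le_exp_mul_of_pl hf hLip hL hmin hPL _ (hs _ (by omega) (by omega))
      _ ≤ Real.exp (-(μ * s₀)) * (f (x (k₀ + i)) - f xstar) := by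
          gcongr
          · exact sub_nonneg.2 (hmin _)
          · exact hs₀ _ (by omega) (by omega)
  have := le_geom (u := fun i => f (x (k₀ + i)) - f xstar) (Real.exp_pos _).le (k - k₀) hstep
  rw [← Real.exp_nat_mul, Nat.add_sub_cancel' hk, Nat.cast_sub hk, add_zero] at this
  convert this using 1
  ring_nf

end GradientDescent

theorem gradient_sqrt_add_const {E : Type*} [NormedAddCommGroup E] [InnerProductSpace ℝ E]
    [CompleteSpace E] {f : E → ℝ} {c : ℝ} {x : E} (hf : DifferentiableAt ℝ f x)
    (hx : 0 < f x + c) :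
    gradient (fun y => √(f y + c)) x = (2 * √(f x + c))⁻¹ • gradient f x := by
  refine HasGradientAt.gradient ?_
  rw [hasGradientAt_iff_hasFDerivAt, map_smul, ← one_div]
  exact (Real.hasDerivAt_sqrt hx.ne').comp_hasFDerivAt x (hf.hasGradientAt.hasFDerivAt.add_const c)

section Energy

variable {E : Type*} [NormedAddCommGroup E] {r : ℕ → ℝ} {η : ℝ} {v : ℕ → E}

theorem aegd_energy_pos (hη : 0 ≤ η) (hr0 : 0 < r 0)
    (hr : ∀ k, r (k + 1) = r k / (1 + 2 * η * ‖v k‖ ^ 2)) (k : ℕ) : 0 < r k := by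
  induction k with
  | zero => exact hr0
  | succ k ih => rw [hr k]; positivity

theorem aegd_energy_antitone (hη : 0 ≤ η) (hr0 : 0 < r 0)
    (hr : ∀ k, r (k + 1) = r k / (1 + 2 * η * ‖v k‖ ^ 2)) : Antitone r :=
  antitone_nat_of_succ_le fun k => by
    rw [hr k]
    exact div_le_self (aegd_energy_pos hη hr0 hr k).le (le_add_of_nonneg_right (by positivity))

end Energy

theorem aegd_pl_linear_rate_general {n : ℕ} (f : EuclideanSpace ℝ (Fin n) → ℝ)
    (hf : Differentiable ℝ f)
    (c : ℝ) (hfc : ∀ x, 0 < f x + c)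
    (g : EuclideanSpace ℝ (Fin n) → ℝ) (hg : g = fun x => Real.sqrt (f x + c))
    (L : ℝ) (hL : 0 < L)
    (hLip : ∀ u v, ‖gradient f u - gradient f v‖ ≤ L * ‖u - v‖)
    (θstar : EuclideanSpace ℝ (Fin n)) (hmin : ∀ x, f θstar ≤ f x)
    (μ : ℝ) (hμ : 0 < μ)
    (hPL : ∀ x, μ * (f x - f θstar) ≤ 1 / 2 * ‖gradient f x‖ ^ 2)
    (η : ℝ) (hη : 0 < η)
    (θ : ℕ → EuclideanSpace ℝ (Fin n)) (r : ℕ → ℝ)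
    (hr0 : r 0 = g (θ 0))
    (hr : ∀ k, r (k + 1) = r k / (1 + 2 * η * ‖gradient g (θ k)‖ ^ 2))
    (hθ : ∀ k, θ (k + 1) = θ k - (2 * η * r (k + 1)) • gradient g (θ k))
    (ηk : ℕ → ℝ) (hηk : ∀ k, ηk k = η * r (k + 1) / g (θ k))
    (k₀ k : ℕ) (hk : k₀ ≤ k)
    (hstep : ∀ j, k₀ ≤ j → j < k → ηk j ≤ 1 / L) :
    f (θ k) - f θstar
      ≤ Real.exp (-(μ * η / Real.sqrt (f (θ k₀) + c)) * ((k : ℝ) - (k₀ : ℝ)) * r k)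
        * (f (θ k₀) - f θstar) := by
  subst hg
  beta_reduce at hr0 hηk
  have hr0_pos : 0 < r 0 := hr0 ▸ Real.sqrt_pos.2 (hfc _)
  have hr_pos := aegd_energy_pos hη.le hr0_pos hr
  have hθ' : ∀ j, θ (j + 1) = θ j - ηk j • gradient f (θ j) := fun j => by
    have := Real.sqrt_pos.2 (hfc (θ j))
    rw [hθ j, gradient_sqrt_add_const (hf _) (hfc _), smul_smul, hηk j]
    congr 2
    field_simp
  have hwindow : ∀ j, k₀ ≤ j → j < k → ηk j ∈ Set.Icc 0 (1 / L) := fun j hj hjk =>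
    ⟨by rw [hηk j]; have := hr_pos (j + 1); positivity, hstep j hj hjk⟩
  have hηk_ge : ∀ j, k₀ ≤ j → j < k → η * r k / √(f (θ k₀) + c) ≤ ηk j := by
    intro j hj hjk
    have hfj := image_le_of_gradient_descent hf hLip hL hθ' hwindow hj hjk.le
    have := hr_pos (j + 1)
    have := Real.sqrt_pos.2 (hfc (θ j))
    rw [hηk j]
    gcongr
    exact aegd_energy_antitone hη.le hr0_pos hr hjk
  convert gradient_descent_pl_linear_rate hf hLip hL hmin hPL hμ.le hθ' hwindow hηk_ge hk using 3
  ring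

/-- For the global AEGD iterates, if `f` is `L`-smooth, has minimizer
`θ*`, satisfies the PL inequality with constant `μ > 0`, and `η_j ≤ 1/L` for all
`k₀ ≤ j < k`, then `f(θ_k) − f(θ*) ≤ exp(−c₀ (k − k₀) r_k) (f(θ_{k₀}) − f(θ*))`,
where `c₀ := μη/√(f(θ_{k₀})+c)`. -/
theorem aegd_pl_linear_rate {n : ℕ} (f : EuclideanSpace ℝ (Fin n) → ℝ)
    (hf : Differentiable ℝ f) (hbdd : ∃ B : ℝ, ∀ x, B ≤ f x)
    (c : ℝ) (hc : 0 < c) (hfc : ∀ x, 0 < f x + c)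
    (g : EuclideanSpace ℝ (Fin n) → ℝ) (hg : g = fun x => Real.sqrt (f x + c))
    (L : ℝ) (hL : 0 < L)
    (hLip : ∀ u v, ‖gradient f u - gradient f v‖ ≤ L * ‖u - v‖)
    (θstar : EuclideanSpace ℝ (Fin n)) (hmin : ∀ x, f θstar ≤ f x)
    (μ : ℝ) (hμ : 0 < μ)
    (hPL : ∀ x, μ * (f x - f θstar) ≤ 1 / 2 * ‖gradient f x‖ ^ 2)
    (η : ℝ) (hη : 0 < η)
    (θ : ℕ → EuclideanSpace ℝ (Fin n)) (r : ℕ → ℝ)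
    (hr0 : r 0 = g (θ 0))
    (hr : ∀ k, r (k + 1) = r k / (1 + 2 * η * ‖gradient g (θ k)‖ ^ 2))
    (hθ : ∀ k, θ (k + 1) = θ k - (2 * η * r (k + 1)) • gradient g (θ k))
    (ηk : ℕ → ℝ) (hηk : ∀ k, ηk k = η * r (k + 1) / g (θ k))
    (k₀ k : ℕ) (hk : k₀ ≤ k)
    (hstep : ∀ j, k₀ ≤ j → j < k → ηk j ≤ 1 / L) :
    f (θ k) - f θstar
      ≤ Real.exp (-(μ * η / Real.sqrt (f (θ k₀) + c)) * ((k : ℝ) - (k₀ : ℝ)) * r k)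
        * (f (θ k₀) - f θstar) :=
  aegd_pl_linear_rate_general f hf c hfc g hg L hL hLip θstar hmin μ hμ hPL η hη θ r hr0 hr hθ ηk
    hηk k₀ k hk hstep
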